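/- arXiv:2303.15910 — 3 statements merged into one kernel-verified Lean document; each statement's English description precedes it below -/
import Mathlib

section
/- Let d, s, r ∈ ℕ and let φ⃗ = (φ₁,…,φ_{2s}) ∈ (ℚ[x])^{2s} with deg φᵢ ≤ d for each 1 ≤ i ≤ 2s. Then: (i) for all finite subsets A₁,…,A_r of ℚ \ ({0} ∪ Z_{φ⃗}) and every weight 𝔞 : ℚ → [0,∞), J_{s,𝔞,φ⃗}(A₁ ∪ ⋯ ∪ A_r) ≤ (d+2)^{2s}·r^{2s}·max_{1≤i≤r} max_{1≤j≤2s} J_{s,𝔞,φ_j}(Aᵢ); (ii) there is a constant κ = κ(s,d) > 0 such that for every finite subset A of ℚ \ ({0} ∪ Z_{φ₁}), for the constant weight 𝔞 ≡ 1, and for every integer 1 ≤ l < s, J_{s,𝔞,φ₁}(A) ≤ κ·|A|^{2s−2l}·J_{l,𝔞,φ₁}(A). -/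
open Polynomial

def lo (s : ℕ) (i : Fin s) : Fin (2*s) := ⟨i.1, by have := i.2; omega⟩
def hi (s : ℕ) (i : Fin s) : Fin (2*s) := ⟨s + i.1, by have := i.2; omega⟩

/-- The weighted mixed energy `J_{s,𝔞,φ⃗}(A)`. -/
noncomputable def Jw (s : ℕ) (𝔞 : ℚ → ℝ) (φ : Fin (2*s) → Polynomial ℚ) (A : Finset ℚ) : ℝ :=
  ∑ a ∈ Fintype.piFinset (fun _ : Fin (2*s) => A),
    if (∏ i : Fin s, a (lo s i) = ∏ i : Fin s, a (hi s i)) ∧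
       (∏ i : Fin s, (φ (lo s i)).eval (a (lo s i))
          = ∏ i : Fin s, (φ (hi s i)).eval (a (hi s i)))
    then ∏ i, 𝔞 (a i) else 0

/-- The weighted mixed energy `J_{s,𝔞,ψ}(A)` with a single polynomial. -/
noncomputable def Jw1 (s : ℕ) (𝔞 : ℚ → ℝ) (ψ : Polynomial ℚ) (A : Finset ℚ) : ℝ :=
  Jw s 𝔞 (fun _ => ψ) A

namespace JAux
open Finset MonoidAlgebra

abbrev GG := ℚˣ × ℚˣ
abbrev RR := MonoidAlgebra ℝ GG

noncomputable def sg : RR →+* RR := MonoidAlgebra.mapDomainRingHom ℝ (invMonoidHom : GG →* GG)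

lemma sg_apply (x : RR) (g : GG) : (sg x).coeff g = x.coeff g⁻¹ := by
  have h : (sg x).coeff = Finsupp.mapDomain (fun a : GG => a⁻¹) x.coeff := rfl
  rw [h]
  conv_lhs => rw [show g = (fun a : GG => a⁻¹) g⁻¹ by simp]
  exact Finsupp.mapDomain_apply inv_injective x.coeff g⁻¹

lemma sg_single (g : GG) (c : ℝ) :
    sg (MonoidAlgebra.single g c) = MonoidAlgebra.single g⁻¹ c := by
  have h : sg (MonoidAlgebra.single g c)
      = MonoidAlgebra.mapDomain (fun a : GG => a⁻¹) (MonoidAlgebra.single g c) := rfl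
  rw [h, MonoidAlgebra.mapDomain_single]

lemma sg_sg (x : RR) : sg (sg x) = x := by
  ext g
  rw [sg_apply, sg_apply, inv_inv]

def NN (x : RR) : Prop := ∀ g, 0 ≤ x.coeff g

lemma NN_one : NN (1 : RR) := by
  intro g
  rw [MonoidAlgebra.one_def, MonoidAlgebra.coeff_single, Finsupp.single_apply]
  split <;> norm_num

lemma NN.mul {x y : RR} (hx : NN x) (hy : NN y) : NN (x * y) := by
  intro g
  classical
  rw [MonoidAlgebra.mul_apply, Finsupp.sum]
  apply Finset.sum_nonneg
  intro a _
  rw [Finsupp.sum]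
  apply Finset.sum_nonneg
  intro b _
  by_cases h : a * b = g <;> simp [h, mul_nonneg (hx a) (hy b)]

lemma NN.sg {x : RR} (hx : NN x) : NN (sg x) := by
  intro g; rw [sg_apply]; exact hx _

lemma NN.pow {x : RR} (hx : NN x) (n : ℕ) : NN (x ^ n) := by
  induction n with
  | zero => rw [pow_zero]; exact NN_one
  | succ n ih => rw [pow_succ]; exact ih.mul hx

lemma NN.prod {ι : Type*} (t : Finset ι) (f : ι → RR) (hf : ∀ i ∈ t, NN (f i)) :
    NN (∏ i ∈ t, f i) := by
  classical
  induction t using Finset.induction_on with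
  | empty => simpa using NN_one
  | insert _ _ hnotmem ih =>
      rw [Finset.prod_insert hnotmem]
      exact (hf _ (Finset.mem_insert_self _ _)).mul
        (ih fun i hi => hf i (Finset.mem_insert_of_mem hi))

noncomputable def ev1 (x : RR) : ℝ := x.coeff 1

lemma NN.ev1_nonneg {x : RR} (hx : NN x) : 0 ≤ ev1 x := hx 1

lemma ev1_mul (x y : RR) : ev1 (x * y) = ∑ g ∈ x.coeff.support, x.coeff g * y.coeff g⁻¹ := by
  rw [ev1, MonoidAlgebra.coeff_mul_apply_left]
  rw [Finsupp.sum]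
  refine Finset.sum_congr rfl fun g _ => by rw [mul_one]

noncomputable def ip (x y : RR) : ℝ := ∑ g ∈ x.coeff.support, x.coeff g * y.coeff g

lemma ip_eq_ev1 (x y : RR) : ip x y = ev1 (x * sg y) := by
  rw [ev1_mul]
  refine Finset.sum_congr rfl fun g _ => by rw [sg_apply, inv_inv]

lemma ip_sq_le (x y : RR) : ip x y ^ 2 ≤ ip x x * ip y y := by
  classical
  set u := x.coeff.support ∪ y.coeff.support with hu
  have hxy : ip x y = ∑ g ∈ u, x.coeff g * y.coeff g := by
    apply Finset.sum_subset Finset.subset_union_left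
    intro g _ hg
    rw [Finsupp.notMem_support_iff.mp hg, zero_mul]
  have hxx : ip x x = ∑ g ∈ u, x.coeff g * x.coeff g := by
    apply Finset.sum_subset Finset.subset_union_left
    intro g _ hg
    rw [Finsupp.notMem_support_iff.mp hg, zero_mul]
  have hyy : ip y y = ∑ g ∈ u, y.coeff g * y.coeff g := by
    apply Finset.sum_subset Finset.subset_union_right
    intro g _ hg
    rw [Finsupp.notMem_support_iff.mp hg, zero_mul]
  rw [hxy, hxx, hyy]
  have := Finset.sum_mul_sq_le_sq_mul_sq u (fun g => x.coeff g) (fun g => y.coeff g)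
  simpa [pow_two] using this

lemma cs_even (X Y : RR) (hX : sg X = X) (hY : sg Y = Y) :
    ev1 (X * Y) ^ 2 ≤ ev1 (X * X) * ev1 (Y * Y) := by
  have h1 : ev1 (X * Y) = ip X Y := by rw [ip_eq_ev1, hY]
  have h2 : ev1 (X * X) = ip X X := by rw [ip_eq_ev1, hX]
  have h3 : ev1 (Y * Y) = ip Y Y := by rw [ip_eq_ev1, hY]
  rw [h1, h2, h3]
  exact ip_sq_le X Y

lemma cs_odd (X Y v : RR) (hX : sg X = X) (hY : sg Y = Y) :
    ev1 (X * Y * (v * sg v)) ^ 2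
      ≤ ev1 (X * X * (v * sg v)) * ev1 (Y * Y * (v * sg v)) := by
  have h1 : X * Y * (v * sg v) = (X * v) * sg (Y * v) := by
    rw [map_mul, hY]; ring
  have h2 : X * X * (v * sg v) = (X * v) * sg (X * v) := by
    rw [map_mul, hX]; ring
  have h3 : Y * Y * (v * sg v) = (Y * v) * sg (Y * v) := by
    rw [map_mul, hY]; ring
  rw [h1, h2, h3, ← ip_eq_ev1, ← ip_eq_ev1, ← ip_eq_ev1]
  exact ip_sq_le _ _

lemma pd_bound (x : RR) (hx : NN x) (g : GG) : (x * sg x).coeff g ≤ (x * sg x).coeff 1 := by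
  classical
  set u : RR := MonoidAlgebra.single g⁻¹ 1 * x with hu
  have key : (x * sg x).coeff g = ip u x := by
    have h1 : (MonoidAlgebra.single g⁻¹ (1:ℝ) * (x * sg x)).coeff 1 = (x * sg x).coeff g := by
      rw [MonoidAlgebra.single_mul_apply]
      simp
    have h2 : ip u x = ev1 (u * sg x) := ip_eq_ev1 u x
    rw [h2, ev1, hu, mul_assoc, h1]
  have huu : ip u u = (x * sg x).coeff 1 := by
    rw [ip_eq_ev1, ev1]
    have : u * sg u = x * sg x := by
      rw [hu, map_mul, sg_single, inv_inv]
      have hs : MonoidAlgebra.single g⁻¹ (1:ℝ) * MonoidAlgebra.single g (1:ℝ) = 1 := by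
        rw [MonoidAlgebra.single_mul_single, inv_mul_cancel, one_mul,
          MonoidAlgebra.one_def]
      calc MonoidAlgebra.single g⁻¹ (1:ℝ) * x * (MonoidAlgebra.single g 1 * sg x)
          = (MonoidAlgebra.single g⁻¹ (1:ℝ) * MonoidAlgebra.single g 1) * (x * sg x) := by ring
        _ = x * sg x := by rw [hs, one_mul]
    rw [this]
  have hxx : ip x x = (x * sg x).coeff 1 := by rw [ip_eq_ev1, ev1]
  have hcs := ip_sq_le u x
  rw [huu, hxx, key] at *
  have h0 : 0 ≤ (x * sg x).coeff g := (hx.mul hx.sg) g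
  have h1 : 0 ≤ (x * sg x).coeff 1 := (hx.mul hx.sg) 1
  nlinarith [hcs]

noncomputable def aug : RR →ₐ[ℝ] ℝ := MonoidAlgebra.lift ℝ ℝ GG 1

lemma aug_single (g : GG) (c : ℝ) : aug (MonoidAlgebra.single g c) = c := by
  rw [aug, MonoidAlgebra.lift_single]
  simp

lemma aug_eq_sum (x : RR) : aug x = ∑ g ∈ x.coeff.support, x.coeff g := by
  rw [aug, MonoidAlgebra.lift_apply]
  rw [Finsupp.sum]
  refine Finset.sum_congr rfl fun g _ => by simp

lemma ev1_mul_le (z w : RR) (hw : NN w) (hz : ∀ g : GG, z.coeff g ≤ z.coeff 1) (hz0 : 0 ≤ z.coeff 1) :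
    ev1 (z * w) ≤ ev1 z * aug w := by
  rw [mul_comm z w, ev1_mul, aug_eq_sum, ev1, mul_comm (z.coeff 1), Finset.sum_mul]
  refine Finset.sum_le_sum fun g _ => ?_
  exact mul_le_mul_of_nonneg_left (hz g⁻¹) (hw g)



section Maximizer

variable {n : ℕ} (v : Fin n → RR)

noncomputable def Pk (k : Fin n) : RR := v k * sg (v k)

lemma sg_Pk (k : Fin n) : sg (Pk v k) = Pk v k := by
  rw [Pk, map_mul, sg_sg, mul_comm]

lemma NN_Pk (hv : ∀ k, NN (v k)) (k : Fin n) : NN (Pk v k) := (hv k).mul (hv k).sg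

noncomputable def En (m : Fin n → ℕ) : ℝ := ev1 (∏ k, Pk v k ^ m k)

lemma En_nonneg (hv : ∀ k, NN (v k)) (m : Fin n → ℕ) : 0 ≤ En v m :=
  (NN.prod _ _ fun k _ => ((NN_Pk v hv k).pow _)).ev1_nonneg

lemma sg_prod_pow (m : Fin n → ℕ) : sg (∏ k, Pk v k ^ m k) = ∏ k, Pk v k ^ m k := by
  rw [map_prod]
  refine Finset.prod_congr rfl fun k _ => by rw [map_pow, sg_Pk]

lemma prod_pow_ite (j : Fin n) (ε : ℕ) :
    (∏ k, Pk v k ^ (if k = j then ε else 0)) = Pk v j ^ ε := by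
  classical
  have h : ∀ k, Pk v k ^ (if k = j then ε else 0) = if k = j then Pk v k ^ ε else 1 := by
    intro k; split <;> simp
  rw [Finset.prod_congr rfl fun k _ => h k, Finset.prod_ite_eq' Finset.univ j
    (fun k => Pk v k ^ ε)]
  simp

lemma prod_pow_add_ite (c : Fin n → ℕ) (j : Fin n) (ε : ℕ) :
    (∏ k, Pk v k ^ (c k + (if k = j then ε else 0)))
      = (∏ k, Pk v k ^ c k) * Pk v j ^ ε := by
  classical
  have h : ∀ k, Pk v k ^ (c k + (if k = j then ε else 0))
      = Pk v k ^ c k * Pk v k ^ (if k = j then ε else 0) := fun k => pow_add _ _ _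
  rw [Finset.prod_congr rfl fun k _ => h k, Finset.prod_mul_distrib, prod_pow_ite]

lemma En_pure (k₀ : Fin n) (M : ℕ) :
    En v (fun k => if k = k₀ then M else 0) = ev1 (Pk v k₀ ^ M) := by
  classical
  rw [En]
  congr 1
  have h : ∀ k, Pk v k ^ (if k = k₀ then M else 0) = if k = k₀ then Pk v k ^ M else 1 := by
    intro k; split <;> simp
  rw [Finset.prod_congr rfl fun k _ => h k, Finset.prod_ite_eq' Finset.univ k₀
    (fun k => Pk v k ^ M)]
  simp

lemma En_split (a b : Fin n → ℕ) (j : Fin n) (ε : ℕ) (hε : ε ≤ 1) :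
    En v (fun k => a k + b k + (if k = j then ε else 0)) ^ 2
      ≤ En v (fun k => 2 * a k + (if k = j then ε else 0))
        * En v (fun k => 2 * b k + (if k = j then ε else 0)) := by
  classical
  have hXs : sg (∏ k, Pk v k ^ a k) = ∏ k, Pk v k ^ a k := sg_prod_pow v a
  have hYs : sg (∏ k, Pk v k ^ b k) = ∏ k, Pk v k ^ b k := sg_prod_pow v b
  set X := ∏ k, Pk v k ^ a k with hX
  set Y := ∏ k, Pk v k ^ b k with hY
  have e1 : En v (fun k => a k + b k + (if k = j then ε else 0)) = ev1 (X * Y * Pk v j ^ ε) := by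
    rw [En, prod_pow_add_ite v (fun k => a k + b k) j ε]
    congr 2
    rw [hX, hY, ← Finset.prod_mul_distrib]
    exact Finset.prod_congr rfl fun k _ => (pow_add _ _ _)
  have e2 : En v (fun k => 2 * a k + (if k = j then ε else 0)) = ev1 (X * X * Pk v j ^ ε) := by
    rw [En, prod_pow_add_ite v (fun k => 2 * a k) j ε]
    congr 2
    rw [hX, ← Finset.prod_mul_distrib]
    refine Finset.prod_congr rfl fun k _ => ?_
    rw [two_mul, pow_add]
  have e3 : En v (fun k => 2 * b k + (if k = j then ε else 0)) = ev1 (Y * Y * Pk v j ^ ε) := by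
    rw [En, prod_pow_add_ite v (fun k => 2 * b k) j ε]
    congr 2
    rw [hY, ← Finset.prod_mul_distrib]
    refine Finset.prod_congr rfl fun k _ => ?_
    rw [two_mul, pow_add]
  rw [e1, e2, e3]
  interval_cases ε
  · simpa using cs_even X Y hXs hYs
  · have : Pk v j ^ 1 = v j * sg (v j) := by rw [pow_one, Pk]
    rw [this]
    exact cs_odd X Y (v j) hXs hYs

lemma fill (m : Fin n → ℕ) (t : ℕ) (ht : t ≤ ∑ k, m k) :
    ∃ a : Fin n → ℕ, (∀ k, a k ≤ m k) ∧ ∑ k, a k = t := by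
  classical
  induction t with
  | zero => exact ⟨fun _ => 0, fun k => Nat.zero_le _, by simp⟩
  | succ t ih =>
      obtain ⟨a, ha, hsum⟩ := ih (by omega)
      have hex : ∃ k, a k < m k := by
        by_contra h
        push_neg at h
        have : ∑ k, m k ≤ ∑ k, a k := Finset.sum_le_sum fun k _ => h k
        omega
      obtain ⟨k0, hk0⟩ := hex
      refine ⟨Function.update a k0 (a k0 + 1), ?_, ?_⟩
      · intro k
        by_cases h : k = k0
        · subst h; rw [Function.update_self]; omega
        · rw [Function.update_of_ne h]; exact ha k
      · rw [Finset.sum_update_of_mem (Finset.mem_univ _)]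
        have h2 : ∑ k ∈ Finset.univ \ {k0}, a k + a k0 = t := by
          rw [← hsum, Finset.sum_eq_sum_sdiff_singleton_add (Finset.mem_univ k0) a]
        omega

lemma maximizer {n : ℕ} (v : Fin n → RR) (hv : ∀ k, NN (v k)) (M : ℕ) (hM : 0 < M)
    (ne : (Finset.univ : Finset (Fin n)).Nonempty) (m : Fin n → ℕ) (hm : ∑ k, m k = M) :
    En v m ≤ Finset.univ.sup' ne (fun k => ev1 (Pk v k ^ M)) := by
  classical
  set D := Finset.univ.sup' ne (fun k => ev1 (Pk v k ^ M)) with hD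
  set S : Finset (Fin n → ℕ) :=
    (Fintype.piFinset (fun _ : Fin n => Finset.range (M+1))).filter
      (fun m' => ∑ k, m' k = M) with hSdef
  have hmemS : ∀ m' : Fin n → ℕ, (∑ k, m' k = M) → m' ∈ S := by
    intro m' h
    rw [hSdef, Finset.mem_filter]
    refine ⟨?_, h⟩
    rw [Fintype.mem_piFinset]
    intro k
    rw [Finset.mem_range]
    have : m' k ≤ ∑ k, m' k :=
      Finset.single_le_sum (fun _ _ => Nat.zero_le _) (Finset.mem_univ k)
    omega
  have hsumS : ∀ m' ∈ S, ∑ k, m' k = M := by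
    intro m' h
    rw [hSdef, Finset.mem_filter] at h
    exact h.2
  have hSne : S.Nonempty := ⟨m, hmemS m hm⟩
  set ρ := S.sup' hSne (En v) with hρdef
  have hEnρ : ∀ m' ∈ S, En v m' ≤ ρ := fun m' h => Finset.le_sup' _ h
  have hD0 : 0 ≤ D := by
    rw [hD]
    obtain ⟨k, hk⟩ := ne
    exact le_trans (((NN_Pk v hv k).pow M).ev1_nonneg)
      (Finset.le_sup' (fun k => ev1 (Pk v k ^ M)) hk)
  suffices hρD : ρ ≤ D by exact le_trans (hEnρ m (hmemS m hm)) hρD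
  by_cases hρ0 : ρ ≤ 0
  · linarith
  push_neg at hρ0
  set F := S.filter (fun m' => En v m' = ρ) with hFdef
  have hFne : F.Nonempty := by
    obtain ⟨m', hm', he⟩ := Finset.exists_mem_eq_sup' hSne (En v)
    exact ⟨m', by rw [hFdef, Finset.mem_filter]; exact ⟨hm', he.symm⟩⟩
  obtain ⟨mx, hmxF, hmax⟩ := Finset.exists_max_image F (fun m' => Finset.univ.sup m') hFne
  have hmxS : mx ∈ S := (Finset.mem_filter.mp hmxF).1
  have hmxρ : En v mx = ρ := (Finset.mem_filter.mp hmxF).2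
  have hmxsum : ∑ k, mx k = M := hsumS mx hmxS
  obtain ⟨k₀, _, hk₀⟩ := Finset.exists_mem_eq_sup Finset.univ ne mx
  set p := mx k₀ with hp
  clear_value p
  have hple : ∀ k, mx k ≤ p := by
    intro k
    have h := Finset.le_sup (f := mx) (Finset.mem_univ k)
    rw [hk₀] at h
    exact h
  have hpM : p ≤ M := by
    rw [hp, ← hmxsum]
    exact Finset.single_le_sum (fun _ _ => Nat.zero_le _) (Finset.mem_univ k₀)
  have hp1 : 1 ≤ p := by
    by_contra h
    push_neg at h
    interval_cases p
    have : ∑ k, mx k = 0 := Finset.sum_eq_zero fun k _ => Nat.le_zero.mp (hple k)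
    omega
  set h2 := M / 2 with hh2
  set ε := M % 2 with hε
  have hMe : M = 2 * h2 + ε := by rw [hh2, hε]; omega
  have hεM : ε ≤ M := by rw [hε]; omega
  clear_value h2 ε
  have hε1 : ε ≤ 1 := by omega
  -- a key common step
  have hstep : ∀ (a b : Fin n → ℕ) (j : Fin n),
      (∀ k, mx k = a k + b k + (if k = j then ε else 0)) →
      (∑ k, a k = h2) → (∑ k, b k = h2) →
      ρ ^ 2 ≤ En v (fun k => 2 * a k + (if k = j then ε else 0)) * ρ ∧
        En v (fun k => 2 * a k + (if k = j then ε else 0)) ≤ ρ := by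
    intro a b j hab hsa hsb
    have hsplit := En_split v a b j ε hε1
    have hmxeq : mx = fun k => a k + b k + (if k = j then ε else 0) := funext hab
    have hc1 : (fun k => 2 * a k + (if k = j then ε else 0)) ∈ S := by
      apply hmemS
      rw [Finset.sum_add_distrib, ← Finset.mul_sum, hsa, Finset.sum_ite_eq' Finset.univ j]
      simp only [Finset.mem_univ, if_true]
      omega
    have hc2 : (fun k => 2 * b k + (if k = j then ε else 0)) ∈ S := by
      apply hmemS
      rw [Finset.sum_add_distrib, ← Finset.mul_sum, hsb, Finset.sum_ite_eq' Finset.univ j]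
      simp only [Finset.mem_univ, if_true]
      omega
    refine ⟨?_, hEnρ _ hc1⟩
    have h1 : ρ ^ 2 ≤ En v (fun k => 2 * a k + (if k = j then ε else 0))
        * En v (fun k => 2 * b k + (if k = j then ε else 0)) := by
      rw [← hmxρ, hmxeq]
      exact hsplit
    have h2 : En v (fun k => 2 * b k + (if k = j then ε else 0)) ≤ ρ := hEnρ _ hc2
    have h3 : 0 ≤ En v (fun k => 2 * a k + (if k = j then ε else 0)) := En_nonneg v hv _
    nlinarith
  by_cases hcase : 2 * h2 + ε ≤ p + p
  -- case 1 : p large, child 1 is pure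
  · have hph2 : h2 + ε ≤ p := by omega
    obtain ⟨a, ha⟩ : ∃ a : Fin n → ℕ, ∀ k, a k = if k = k₀ then h2 else 0 :=
      ⟨fun k => if k = k₀ then h2 else 0, fun k => rfl⟩
    obtain ⟨b, hbdef⟩ : ∃ b : Fin n → ℕ,
        ∀ k, b k = if k = k₀ then mx k - h2 - ε else mx k :=
      ⟨_, fun k => rfl⟩
    have hab : ∀ k, mx k = a k + b k + (if k = k₀ then ε else 0) := by
      intro k
      rw [ha, hbdef]
      by_cases h : k = k₀
      · rw [if_pos h, if_pos h, if_pos h]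
        subst h
        omega
      · rw [if_neg h, if_neg h, if_neg h]
        omega
    have hsa : ∑ k, a k = h2 := by
      rw [Finset.sum_congr rfl fun k _ => ha k, Finset.sum_ite_eq' Finset.univ k₀]
      simp
    have hsb : ∑ k, b k = h2 := by
      have h1 : ∑ k, mx k = ∑ k, a k + ∑ k, b k + ∑ k, (if k = k₀ then ε else 0) := by
        rw [← Finset.sum_add_distrib, ← Finset.sum_add_distrib]
        exact Finset.sum_congr rfl fun k _ => hab k
      rw [Finset.sum_ite_eq' Finset.univ k₀] at h1
      simp only [Finset.mem_univ, if_true] at h1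
      omega
    obtain ⟨hkey, _⟩ := hstep a b k₀ hab hsa hsb
    have hpure : (fun k => 2 * a k + (if k = k₀ then ε else 0))
        = fun k => if k = k₀ then M else 0 := by
      funext k
      rw [ha]
      by_cases h : k = k₀
      · rw [if_pos h, if_pos h, if_pos h]
        omega
      · rw [if_neg h, if_neg h, if_neg h]
    rw [hpure, En_pure] at hkey
    have hED : ev1 (Pk v k₀ ^ M) ≤ D := by
      rw [hD]
      exact Finset.le_sup' (fun k => ev1 (Pk v k ^ M)) (Finset.mem_univ k₀)
    nlinarith
  -- case 2 : p small, child 1 gets bigger max coordinate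
  · have hph2 : p ≤ h2 := by omega
    obtain ⟨m', hm'⟩ : ∃ m' : Fin n → ℕ, ∀ k, m' k = if k = k₀ then 0 else mx k :=
      ⟨_, fun k => rfl⟩
    have hsm' : ∑ k, m' k = M - p := by
      have h1 : ∑ k, mx k = ∑ k, m' k + ∑ k, (if k = k₀ then p else 0) := by
        rw [← Finset.sum_add_distrib]
        refine Finset.sum_congr rfl fun k _ => ?_
        rw [hm']
        by_cases h : k = k₀
        · rw [if_pos h, if_pos h]; subst h; omega
        · rw [if_neg h, if_neg h]; omega
      rw [Finset.sum_ite_eq' Finset.univ k₀] at h1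
      simp only [Finset.mem_univ, if_true] at h1
      omega
    have hfill : h2 - p ≤ ∑ k, m' k := by omega
    obtain ⟨a', ha'le, ha'sum⟩ := fill m' (h2 - p) hfill
    obtain ⟨a, ha⟩ : ∃ a : Fin n → ℕ, ∀ k, a k = a' k + (if k = k₀ then p else 0) :=
      ⟨_, fun k => rfl⟩
    have hale : ∀ k, a k ≤ mx k := by
      intro k
      have h1 := ha'le k
      rw [hm'] at h1
      rw [ha]
      by_cases h : k = k₀
      · rw [if_pos h] at h1 ⊢; subst h; omega
      · rw [if_neg h] at h1 ⊢; omega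
    have hsa : ∑ k, a k = h2 := by
      rw [Finset.sum_congr rfl fun k _ => ha k, Finset.sum_add_distrib, ha'sum,
        Finset.sum_ite_eq' Finset.univ k₀]
      simp only [Finset.mem_univ, if_true]
      omega
    have hj : ∃ j, a j + ε ≤ mx j := by
      rcases Nat.eq_zero_or_pos ε with h0 | h1
      · exact ⟨k₀, by rw [h0]; simpa using hale k₀⟩
      · by_contra h
        push_neg at h
        have hge : ∀ k, mx k ≤ a k := fun k => by have := h k; omega
        have hcmp : ∑ k, mx k ≤ ∑ k, a k := Finset.sum_le_sum fun k _ => hge k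
        rw [hsa, hmxsum] at hcmp
        omega
    obtain ⟨j, hjle⟩ := hj
    obtain ⟨b, hbdef⟩ : ∃ b : Fin n → ℕ,
        ∀ k, b k = mx k - a k - (if k = j then ε else 0) := ⟨_, fun k => rfl⟩
    have hab : ∀ k, mx k = a k + b k + (if k = j then ε else 0) := by
      intro k
      rw [hbdef]
      by_cases h : k = j
      · rw [if_pos h]
        subst h
        omega
      · rw [if_neg h]
        have := hale k
        omega
    have hsb : ∑ k, b k = h2 := by
      have h1 : ∑ k, mx k = ∑ k, a k + ∑ k, b k + ∑ k, (if k = j then ε else 0) := by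
        rw [← Finset.sum_add_distrib, ← Finset.sum_add_distrib]
        exact Finset.sum_congr rfl fun k _ => hab k
      rw [Finset.sum_ite_eq' Finset.univ j] at h1
      simp only [Finset.mem_univ, if_true] at h1
      omega
    obtain ⟨hkey, hle⟩ := hstep a b j hab hsa hsb
    have heq : En v (fun k => 2 * a k + (if k = j then ε else 0)) = ρ := by
      by_contra hne
      have hlt : En v (fun k => 2 * a k + (if k = j then ε else 0)) < ρ :=
        lt_of_le_of_ne hle hne
      nlinarith
    have hc1F : (fun k => 2 * a k + (if k = j then ε else 0)) ∈ F := by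
      rw [hFdef, Finset.mem_filter]
      refine ⟨?_, heq⟩
      apply hmemS
      rw [Finset.sum_add_distrib, ← Finset.mul_sum, hsa, Finset.sum_ite_eq' Finset.univ j]
      simp only [Finset.mem_univ, if_true]
      omega
    have hcontra := hmax _ hc1F
    have hbig : p + 1 ≤ 2 * a k₀ + (if k₀ = j then ε else 0) := by
      have hak : p ≤ a k₀ := by rw [ha]; simp
      by_cases h : k₀ = j
      · rw [if_pos h]; omega
      · rw [if_neg h]; omega
    have hsup : 2 * a k₀ + (if k₀ = j then ε else 0)
        ≤ Finset.univ.sup (fun k => 2 * a k + (if k = j then ε else 0)) :=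
      Finset.le_sup (f := fun k => 2 * a k + (if k = j then ε else 0)) (Finset.mem_univ k₀)
    rw [hk₀] at hcontra
    omega

end Maximizer

section Translation

noncomputable def uq (q : ℚ) : ℚˣ := if h : q = 0 then 1 else Units.mk0 q h

lemma uq_coe {q : ℚ} (h : q ≠ 0) : (uq q : ℚ) = q := by
  rw [uq, dif_neg h]
  rfl

noncomputable def gam (ψ : Polynomial ℚ) (a : ℚ) : GG := (uq a, uq (ψ.eval a))

noncomputable def vA (𝔞 : ℚ → ℝ) (ψ : Polynomial ℚ) (C : Finset ℚ) : RR :=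
  ∑ a ∈ C, MonoidAlgebra.single (gam ψ a) (𝔞 a)

lemma NN_vA (𝔞 : ℚ → ℝ) (h𝔞 : ∀ x, 0 ≤ 𝔞 x) (ψ : Polynomial ℚ) (C : Finset ℚ) :
    NN (vA 𝔞 ψ C) := by
  intro g
  rw [vA, MonoidAlgebra.coeff_sum, Finsupp.finset_sum_apply]
  apply Finset.sum_nonneg
  intro a _
  rw [MonoidAlgebra.coeff_single, Finsupp.single_apply]
  split
  · exact h𝔞 a
  · exact le_refl 0

lemma units_prod_coe {s : ℕ} (c : Fin s → ℚ) : ((∏ i, uq (c i) : ℚˣ) : ℚ) = ∏ i, (uq (c i) : ℚ) := by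
  exact map_prod (Units.coeHom ℚ) _ _

lemma units_prod_eq {s : ℕ} (c : Fin s → ℚ) (hc : ∀ i, c i ≠ 0) :
    ((∏ i, uq (c i) : ℚˣ) : ℚ) = ∏ i, c i := by
  rw [units_prod_coe]
  exact Finset.prod_congr rfl fun i _ => uq_coe (hc i)

lemma units_prod_iff {s : ℕ} (c c' : Fin s → ℚ) (hc : ∀ i, c i ≠ 0) (hc' : ∀ i, c' i ≠ 0) :
    (∏ i, uq (c i)) = (∏ i, uq (c' i)) ↔ (∏ i, c i) = (∏ i, c' i) := by
  constructor
  · intro h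
    rw [← units_prod_eq c hc, ← units_prod_eq c' hc', h]
  · intro h
    apply Units.ext
    rw [units_prod_eq c hc, units_prod_eq c' hc', h]

lemma prod_split {M : Type*} [CommMonoid M] (s : ℕ) (f : Fin (2*s) → M) :
    ∏ k, f k = (∏ i : Fin s, f (lo s i)) * ∏ i : Fin s, f (hi s i) := by
  have h : 2*s = s + s := by omega
  have h1 : ∏ k, f k = ∏ i : Fin (s+s), f (Fin.cast h.symm i) := by
    apply Fintype.prod_equiv (finCongr h)
    intro k
    rfl
  rw [h1, Fin.prod_univ_add]
  congr 1

lemma gam_prod_iff {s : ℕ} (c c' : Fin s → ℚ) (ψ ψ' : Fin s → Polynomial ℚ)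
    (hc : ∀ i, c i ≠ 0 ∧ (ψ i).eval (c i) ≠ 0)
    (hc' : ∀ i, c' i ≠ 0 ∧ (ψ' i).eval (c' i) ≠ 0) :
    (∏ i, gam (ψ i) (c i)) = (∏ i, gam (ψ' i) (c' i)) ↔
      ((∏ i, c i) = (∏ i, c' i) ∧
        (∏ i, (ψ i).eval (c i)) = (∏ i, (ψ' i).eval (c' i))) := by
  rw [Prod.ext_iff]
  rw [Prod.fst_prod, Prod.snd_prod, Prod.fst_prod, Prod.snd_prod]
  rw [show (fun i => (gam (ψ i) (c i)).1) = fun i => uq (c i) from rfl]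
  constructor
  · rintro ⟨h1, h2⟩
    exact ⟨(units_prod_iff c c' (fun i => (hc i).1) (fun i => (hc' i).1)).mp h1,
      (units_prod_iff _ _ (fun i => (hc i).2) (fun i => (hc' i).2)).mp h2⟩
  · rintro ⟨h1, h2⟩
    exact ⟨(units_prod_iff c c' (fun i => (hc i).1) (fun i => (hc' i).1)).mpr h1,
      (units_prod_iff _ _ (fun i => (hc i).2) (fun i => (hc' i).2)).mpr h2⟩

noncomputable def cmb (s : ℕ) (t1 t2 : Fin s → ℚ) : Fin (2*s) → ℚ :=
  fun k => if h : (k : ℕ) < s then t1 ⟨k, h⟩ else t2 ⟨(k : ℕ) - s, by have := k.2; omega⟩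

lemma cmb_lo (s : ℕ) (t1 t2 : Fin s → ℚ) (i : Fin s) : cmb s t1 t2 (lo s i) = t1 i := by
  rw [cmb]
  have h : ((lo s i : Fin (2*s)) : ℕ) < s := i.2
  rw [dif_pos h]
  congr 1

lemma cmb_hi (s : ℕ) (t1 t2 : Fin s → ℚ) (i : Fin s) : cmb s t1 t2 (hi s i) = t2 i := by
  rw [cmb]
  have h : ¬ ((hi s i : Fin (2*s)) : ℕ) < s := by simp [hi]
  rw [dif_neg h]
  congr 1
  exact Fin.ext (by simp [hi])

lemma translation (𝔞 : ℚ → ℝ) (s : ℕ) (W : Fin (2*s) → Finset ℚ) (Ψ : Fin (2*s) → Polynomial ℚ)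
    (hW : ∀ k, ∀ a ∈ W k, a ≠ 0 ∧ (Ψ k).eval a ≠ 0) :
    (∑ t ∈ Fintype.piFinset W,
      if (∏ i : Fin s, t (lo s i) = ∏ i : Fin s, t (hi s i)) ∧
         (∏ i : Fin s, (Ψ (lo s i)).eval (t (lo s i))
            = ∏ i : Fin s, (Ψ (hi s i)).eval (t (hi s i)))
      then ∏ k, 𝔞 (t k) else 0)
    = ev1 ((∏ i : Fin s, vA 𝔞 (Ψ (lo s i)) (W (lo s i)))
        * sg (∏ i : Fin s, vA 𝔞 (Ψ (hi s i)) (W (hi s i)))) := by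
  classical
  have hX : (∏ i : Fin s, vA 𝔞 (Ψ (lo s i)) (W (lo s i)))
      = ∑ t1 ∈ Fintype.piFinset (fun i : Fin s => W (lo s i)),
          MonoidAlgebra.single (∏ i, gam (Ψ (lo s i)) (t1 i)) (∏ i, 𝔞 (t1 i)) := by
    simp only [vA]
    rw [Finset.prod_univ_sum]
    exact Finset.sum_congr rfl fun t1 _ => MonoidAlgebra.prod_single _ _ _
  have hY : sg (∏ i : Fin s, vA 𝔞 (Ψ (hi s i)) (W (hi s i)))
      = ∑ t2 ∈ Fintype.piFinset (fun i : Fin s => W (hi s i)),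
          MonoidAlgebra.single (∏ i, gam (Ψ (hi s i)) (t2 i))⁻¹ (∏ i, 𝔞 (t2 i)) := by
    have hY0 : (∏ i : Fin s, vA 𝔞 (Ψ (hi s i)) (W (hi s i)))
        = ∑ t2 ∈ Fintype.piFinset (fun i : Fin s => W (hi s i)),
            MonoidAlgebra.single (∏ i, gam (Ψ (hi s i)) (t2 i)) (∏ i, 𝔞 (t2 i)) := by
      simp only [vA]
      rw [Finset.prod_univ_sum]
      exact Finset.sum_congr rfl fun t2 _ => MonoidAlgebra.prod_single _ _ _
    rw [hY0, map_sum]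
    exact Finset.sum_congr rfl fun t2 _ => sg_single _ _
  rw [hX, hY, Finset.sum_mul_sum]
  have hRHS : ev1 (∑ t1 ∈ Fintype.piFinset (fun i : Fin s => W (lo s i)),
        ∑ t2 ∈ Fintype.piFinset (fun i : Fin s => W (hi s i)),
        MonoidAlgebra.single (∏ i, gam (Ψ (lo s i)) (t1 i)) (∏ i, 𝔞 (t1 i))
          * MonoidAlgebra.single (∏ i, gam (Ψ (hi s i)) (t2 i))⁻¹ (∏ i, 𝔞 (t2 i)))
      = ∑ t1 ∈ Fintype.piFinset (fun i : Fin s => W (lo s i)),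
        ∑ t2 ∈ Fintype.piFinset (fun i : Fin s => W (hi s i)),
        (if (∏ i, gam (Ψ (lo s i)) (t1 i)) = (∏ i, gam (Ψ (hi s i)) (t2 i))
          then (∏ i, 𝔞 (t1 i)) * (∏ i, 𝔞 (t2 i)) else 0) := by
    rw [ev1, MonoidAlgebra.coeff_sum, Finsupp.finset_sum_apply]
    refine Finset.sum_congr rfl fun t1 _ => ?_
    rw [MonoidAlgebra.coeff_sum, Finsupp.finset_sum_apply]
    refine Finset.sum_congr rfl fun t2 _ => ?_
    rw [MonoidAlgebra.single_mul_single, MonoidAlgebra.coeff_single, Finsupp.single_apply]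
    by_cases h : (∏ i, gam (Ψ (lo s i)) (t1 i)) = (∏ i, gam (Ψ (hi s i)) (t2 i))
    · rw [if_pos h, if_pos (by rw [h, mul_inv_cancel])]
    · rw [if_neg h, if_neg (by
        intro hc
        exact h (by rwa [mul_inv_eq_one] at hc))]
  rw [hRHS, ← Finset.sum_product']
  apply Finset.sum_nbij' (i := fun t => ((fun i => t (lo s i)), (fun i => t (hi s i))))
    (j := fun p => cmb s p.1 p.2)
  · intro t ht
    rw [Finset.mem_product]
    rw [Fintype.mem_piFinset] at ht
    constructor
    · rw [Fintype.mem_piFinset]; intro i; exact ht (lo s i)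
    · rw [Fintype.mem_piFinset]; intro i; exact ht (hi s i)
  · intro p hp
    rw [Finset.mem_product, Fintype.mem_piFinset, Fintype.mem_piFinset] at hp
    rw [Fintype.mem_piFinset]
    intro k
    rw [cmb]
    by_cases h : (k : ℕ) < s
    · rw [dif_pos h]
      have hk : lo s ⟨(k : ℕ), h⟩ = k := Fin.ext rfl
      have := hp.1 ⟨(k : ℕ), h⟩
      rwa [hk] at this
    · rw [dif_neg h]
      have hks : (k : ℕ) - s < s := by have := k.2; omega
      have hk : hi s ⟨(k : ℕ) - s, hks⟩ = k := Fin.ext (by simp [hi]; omega)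
      have := hp.2 ⟨(k : ℕ) - s, hks⟩
      rwa [hk] at this
  · intro t _
    funext k
    rw [cmb]
    by_cases h : (k : ℕ) < s
    · rw [dif_pos h]
      exact congrArg t (Fin.ext rfl)
    · rw [dif_neg h]
      refine congrArg t (Fin.ext ?_)
      simp only [hi]
      have := k.2
      omega
  · intro p _
    ext i
    · exact cmb_lo s p.1 p.2 i
    · exact cmb_hi s p.1 p.2 i
  · intro t ht
    rw [Fintype.mem_piFinset] at ht
    have hgood : ∀ k, t k ≠ 0 ∧ (Ψ k).eval (t k) ≠ 0 := fun k => hW k (t k) (ht k)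
    have hcond : ((∏ i : Fin s, t (lo s i) = ∏ i : Fin s, t (hi s i)) ∧
         (∏ i : Fin s, (Ψ (lo s i)).eval (t (lo s i))
            = ∏ i : Fin s, (Ψ (hi s i)).eval (t (hi s i))))
        ↔ ((∏ i, gam (Ψ (lo s i)) (t (lo s i))) = (∏ i, gam (Ψ (hi s i)) (t (hi s i)))) :=
      (gam_prod_iff (fun i => t (lo s i)) (fun i => t (hi s i))
        (fun i => Ψ (lo s i)) (fun i => Ψ (hi s i))
        (fun i => hgood (lo s i)) (fun i => hgood (hi s i))).symm
    have hw : (∏ k, 𝔞 (t k)) = (∏ i : Fin s, 𝔞 (t (lo s i))) * ∏ i : Fin s, 𝔞 (t (hi s i)) :=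
      prod_split s (fun k => 𝔞 (t k))
    rw [if_congr hcond hw rfl]

end Translation

section Assembly

lemma Jw_nonneg (s : ℕ) (𝔞 : ℚ → ℝ) (h𝔞 : ∀ x, 0 ≤ 𝔞 x) (φ : Fin (2*s) → Polynomial ℚ)
    (A : Finset ℚ) : 0 ≤ Jw s 𝔞 φ A := by
  rw [Jw]
  apply Finset.sum_nonneg
  intro t _
  split
  · exact Finset.prod_nonneg fun i _ => h𝔞 _
  · exact le_refl 0

lemma prod_const_fin (s : ℕ) (x : RR) : (∏ _i : Fin s, x) = x ^ s := by
  rw [Finset.prod_const, Finset.card_univ, Fintype.card_fin]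

lemma Jw1_eq (s : ℕ) (𝔞 : ℚ → ℝ) (ψ : Polynomial ℚ) (C : Finset ℚ)
    (hC : ∀ a ∈ C, a ≠ 0 ∧ ψ.eval a ≠ 0) :
    Jw1 s 𝔞 ψ C = ev1 ((vA 𝔞 ψ C * sg (vA 𝔞 ψ C)) ^ s) := by
  have h := translation 𝔞 s (fun _ => C) (fun _ => ψ) (fun _ a ha => hC a ha)
  rw [Jw1, Jw]
  rw [h, prod_const_fin, map_pow, ← mul_pow]

lemma union_expand (r s : ℕ) (hr : 0 < r) (A : Fin r → Finset ℚ) (g : (Fin (2*s) → ℚ) → ℝ)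
    (hg : ∀ t, 0 ≤ g t) :
    ∑ t ∈ Fintype.piFinset (fun _ : Fin (2*s) => Finset.univ.biUnion A), g t
      ≤ ∑ ι : Fin (2*s) → Fin r, ∑ t ∈ Fintype.piFinset (fun k => A (ι k)), g t := by
  classical
  have hsub : ∀ ι : Fin (2*s) → Fin r, Fintype.piFinset (fun k => A (ι k)) ⊆
      Fintype.piFinset (fun _ : Fin (2*s) => Finset.univ.biUnion A) := by
    intro ι t ht
    rw [Fintype.mem_piFinset] at ht ⊢
    intro k
    exact Finset.mem_biUnion.mpr ⟨ι k, Finset.mem_univ _, ht k⟩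
  calc ∑ t ∈ Fintype.piFinset (fun _ : Fin (2*s) => Finset.univ.biUnion A), g t
      ≤ ∑ t ∈ Fintype.piFinset (fun _ : Fin (2*s) => Finset.univ.biUnion A),
          (∑ ι : Fin (2*s) → Fin r,
            if t ∈ Fintype.piFinset (fun k => A (ι k)) then g t else 0) := by
        apply Finset.sum_le_sum
        intro t ht
        rw [Fintype.mem_piFinset] at ht
        have hch : ∀ k : Fin (2*s), ∃ i : Fin r, t k ∈ A i := by
          intro k
          have := ht k
          rw [Finset.mem_biUnion] at this
          obtain ⟨i, _, hi⟩ := this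
          exact ⟨i, hi⟩
        choose f hf using hch
        have hmem : t ∈ Fintype.piFinset (fun k => A (f k)) := by
          rw [Fintype.mem_piFinset]
          exact hf
        have := Finset.single_le_sum
          (f := fun ι : Fin (2*s) → Fin r =>
            if t ∈ Fintype.piFinset (fun k => A (ι k)) then g t else 0)
          (fun ι _ => by
            beta_reduce
            split
            · exact hg t
            · exact le_refl 0) (Finset.mem_univ f)
        simpa only [if_pos hmem] using this
    _ = ∑ ι : Fin (2*s) → Fin r,
          ∑ t ∈ Fintype.piFinset (fun _ : Fin (2*s) => Finset.univ.biUnion A),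
            (if t ∈ Fintype.piFinset (fun k => A (ι k)) then g t else 0) :=
        Finset.sum_comm
    _ = ∑ ι : Fin (2*s) → Fin r, ∑ t ∈ Fintype.piFinset (fun k => A (ι k)), g t := by
        refine Finset.sum_congr rfl fun ι _ => ?_
        rw [Finset.sum_ite_mem, Finset.inter_eq_right.mpr (hsub ι)]

lemma mixed_bound (s : ℕ) (hs : 0 < s) (𝔞 : ℚ → ℝ) (h𝔞 : ∀ x, 0 ≤ 𝔞 x)
    (W : Fin (2*s) → Finset ℚ) (Ψ : Fin (2*s) → Polynomial ℚ)
    (hW : ∀ k, ∀ a ∈ W k, a ≠ 0 ∧ (Ψ k).eval a ≠ 0)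
    (ne2 : (Finset.univ : Finset (Fin (2*s))).Nonempty) :
    (∑ t ∈ Fintype.piFinset W,
      if (∏ i : Fin s, t (lo s i) = ∏ i : Fin s, t (hi s i)) ∧
         (∏ i : Fin s, (Ψ (lo s i)).eval (t (lo s i))
            = ∏ i : Fin s, (Ψ (hi s i)).eval (t (hi s i)))
      then ∏ k, 𝔞 (t k) else 0)
    ≤ Finset.univ.sup' ne2 (fun k => Jw1 s 𝔞 (Ψ k) (W k)) := by
  classical
  set w : Fin (2*s) → RR := fun k => vA 𝔞 (Ψ k) (W k) with hw
  have hNw : ∀ k, NN (w k) := fun k => NN_vA 𝔞 h𝔞 _ _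
  set D := Finset.univ.sup' ne2 (fun k => ev1 (Pk w k ^ s)) with hD
  have hDentry : ∀ k, ev1 (Pk w k ^ s) = Jw1 s 𝔞 (Ψ k) (W k) := by
    intro k
    rw [Jw1_eq s 𝔞 (Ψ k) (W k) (hW k), Pk]
  have hDeq : D = Finset.univ.sup' ne2 (fun k => Jw1 s 𝔞 (Ψ k) (W k)) := by
    rw [hD]
    exact Finset.sup'_congr ne2 rfl (fun k _ => hDentry k)
  rw [← hDeq]
  have hD0 : 0 ≤ D := by
    obtain ⟨k, hk⟩ := ne2
    refine le_trans ?_ (Finset.le_sup' (fun k => ev1 (Pk w k ^ s)) hk)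
    exact ((NN_Pk w hNw k).pow s).ev1_nonneg
  -- the energy of a product indexed by classes is at most D
  have key : ∀ (c : Fin s → Fin (2*s)),
      ev1 ((∏ i : Fin s, w (c i)) * sg (∏ i : Fin s, w (c i))) ≤ D := by
    intro c
    have h1 : (∏ i : Fin s, w (c i)) * sg (∏ i : Fin s, w (c i))
        = ∏ i : Fin s, Pk w (c i) := by
      rw [map_prod, ← Finset.prod_mul_distrib]
      rfl
    have h2 : (∏ i : Fin s, Pk w (c i))
        = ∏ k, Pk w k ^ (Finset.univ.filter (fun i => c i = k)).card := by
      rw [← Finset.prod_fiberwise_of_maps_to (g := c) (fun i _ => Finset.mem_univ (c i))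
        (fun i => Pk w (c i))]
      refine Finset.prod_congr rfl fun k _ => ?_
      have hcongr : ∀ i ∈ Finset.univ.filter (fun i => c i = k), Pk w (c i) = Pk w k := by
        intro i hi
        rw [(Finset.mem_filter.mp hi).2]
      rw [Finset.prod_congr rfl hcongr, Finset.prod_const]
    have h3 : ∑ k, (Finset.univ.filter (fun i => c i = k)).card = s := by
      have := Finset.card_eq_sum_card_fiberwise (f := c) (t := Finset.univ)
        (fun i (_ : i ∈ (Finset.univ : Finset (Fin s))) => Finset.mem_univ (c i))
      rw [Finset.card_univ, Fintype.card_fin] at this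
      exact this.symm
    rw [h1, h2, hD]
    exact maximizer w hNw s hs ne2 _ h3
  have htr := translation 𝔞 s W Ψ hW
  rw [htr]
  have hXdef : (∏ i : Fin s, vA 𝔞 (Ψ (lo s i)) (W (lo s i))) = ∏ i : Fin s, w (lo s i) := rfl
  have hYdef : (∏ i : Fin s, vA 𝔞 (Ψ (hi s i)) (W (hi s i))) = ∏ i : Fin s, w (hi s i) := rfl
  rw [hXdef, hYdef]
  set X := ∏ i : Fin s, w (lo s i) with hX
  set Y := ∏ i : Fin s, w (hi s i) with hY
  have hNX : NN X := NN.prod _ _ fun i _ => hNw _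
  have hNY : NN Y := NN.prod _ _ fun i _ => hNw _
  have hip : ev1 (X * sg Y) = ip X Y := (ip_eq_ev1 X Y).symm
  have hcs := ip_sq_le X Y
  have hXX : ip X X = ev1 (X * sg X) := ip_eq_ev1 X X
  have hYY : ip Y Y = ev1 (Y * sg Y) := ip_eq_ev1 Y Y
  have hXle : ev1 (X * sg X) ≤ D := key (fun i => lo s i)
  have hYle : ev1 (Y * sg Y) ≤ D := key (fun i => hi s i)
  have hXnn : 0 ≤ ev1 (X * sg X) := (hNX.mul hNX.sg).ev1_nonneg
  have hYnn : 0 ≤ ev1 (Y * sg Y) := (hNY.mul hNY.sg).ev1_nonneg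
  have hev0 : 0 ≤ ev1 (X * sg Y) := (hNX.mul hNY.sg).ev1_nonneg
  rw [hip] at hev0 ⊢
  nlinarith [hcs]

end Assembly

lemma Jw1_nonneg (s : ℕ) (𝔞 : ℚ → ℝ) (h𝔞 : ∀ x, 0 ≤ 𝔞 x) (ψ : Polynomial ℚ)
    (A : Finset ℚ) : 0 ≤ Jw1 s 𝔞 ψ A := Jw_nonneg s 𝔞 h𝔞 _ A

end JAux

theorem J_energy_union_and_moment_bounds (d s : ℕ) (hs : 0 < s) :
    ∃ κ : ℝ, 0 < κ ∧
      ∀ r : ℕ, 0 < r → ∀ φ : Fin (2*s) → Polynomial ℚ, (∀ i, (φ i).natDegree ≤ d) →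
        ((∀ A : Fin r → Finset ℚ,
            (∀ i, ∀ a ∈ A i, a ≠ 0 ∧ ∀ j, (φ j).eval a ≠ 0) →
            ∀ 𝔞 : ℚ → ℝ, (∀ x, 0 ≤ 𝔞 x) →
              ∃ i : Fin r, ∃ j : Fin (2*s),
                Jw s 𝔞 φ (Finset.univ.biUnion A) ≤
                  ((d:ℝ) + 2) ^ (2*s) * (r : ℝ) ^ (2*s) * Jw1 s 𝔞 (φ j) (A i)) ∧
         (∀ A : Finset ℚ,
            (∀ a ∈ A, a ≠ 0 ∧ (φ ⟨0, by omega⟩).eval a ≠ 0) →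
            ∀ l : ℕ, 1 ≤ l → l < s →
              Jw1 s (fun _ => 1) (φ ⟨0, by omega⟩) A ≤
                κ * (A.card : ℝ) ^ (2*s - 2*l) *
                  Jw1 l (fun _ => 1) (φ ⟨0, by omega⟩) A)) := by

  classical
  open JAux in
  refine ⟨1, one_pos, ?_⟩
  intro r hr φ hφd
  have h2s : 0 < 2*s := by omega
  have ne2 : (Finset.univ : Finset (Fin (2*s))).Nonempty := ⟨⟨0, h2s⟩, Finset.mem_univ _⟩
  constructor
  · -- part (i)
    intro A hA 𝔞 h𝔞
    have nepair : (Finset.univ : Finset (Fin r × Fin (2*s))).Nonempty :=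
      ⟨(⟨0, hr⟩, ⟨0, h2s⟩), Finset.mem_univ _⟩
    obtain ⟨pst, _, hpst⟩ := Finset.exists_mem_eq_sup' nepair
      (fun p : Fin r × Fin (2*s) => Jw1 s 𝔞 (φ p.2) (A p.1))
    refine ⟨pst.1, pst.2, ?_⟩
    rw [← hpst]
    set Mstar := Finset.univ.sup' nepair
      (fun p : Fin r × Fin (2*s) => Jw1 s 𝔞 (φ p.2) (A p.1)) with hMs
    have hM0 : 0 ≤ Mstar := by
      rw [hMs]
      refine le_trans (Jw1_nonneg s 𝔞 h𝔞 (φ ⟨0, h2s⟩) (A ⟨0, hr⟩)) ?_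
      exact Finset.le_sup' (fun p : Fin r × Fin (2*s) => Jw1 s 𝔞 (φ p.2) (A p.1))
        (Finset.mem_univ ((⟨0, hr⟩ : Fin r), (⟨0, h2s⟩ : Fin (2*s))))
    set G : (Fin (2*s) → ℚ) → ℝ := fun t =>
      if (∏ i : Fin s, t (lo s i) = ∏ i : Fin s, t (hi s i)) ∧
         (∏ i : Fin s, (φ (lo s i)).eval (t (lo s i))
            = ∏ i : Fin s, (φ (hi s i)).eval (t (hi s i)))
      then ∏ k, 𝔞 (t k) else 0 with hG
    have hG0 : ∀ t, 0 ≤ G t := by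
      intro t
      rw [hG]
      beta_reduce
      split
      · exact Finset.prod_nonneg fun k _ => h𝔞 _
      · exact le_refl 0
    have hJweq : Jw s 𝔞 φ (Finset.univ.biUnion A)
        = ∑ t ∈ Fintype.piFinset (fun _ : Fin (2*s) => Finset.univ.biUnion A), G t := rfl
    have step1 := union_expand r s hr A G hG0
    have step2 : ∀ ι : Fin (2*s) → Fin r,
        (∑ t ∈ Fintype.piFinset (fun k => A (ι k)), G t) ≤ Mstar := by
      intro ι
      have hWgood : ∀ k : Fin (2*s), ∀ a ∈ A (ι k), a ≠ 0 ∧ (φ k).eval a ≠ 0 :=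
        fun k a ha => ⟨(hA (ι k) a ha).1, (hA (ι k) a ha).2 k⟩
      have hmb := mixed_bound s hs 𝔞 h𝔞 (fun k => A (ι k)) φ hWgood ne2
      refine le_trans hmb ?_
      apply Finset.sup'_le
      intro k _
      rw [hMs]
      exact Finset.le_sup' (fun p : Fin r × Fin (2*s) => Jw1 s 𝔞 (φ p.2) (A p.1))
        (Finset.mem_univ (ι k, k))
    have step3 : (∑ ι : Fin (2*s) → Fin r,
        ∑ t ∈ Fintype.piFinset (fun k => A (ι k)), G t)
        ≤ (r : ℝ) ^ (2*s) * Mstar := by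
      calc (∑ ι : Fin (2*s) → Fin r, ∑ t ∈ Fintype.piFinset (fun k => A (ι k)), G t)
          ≤ ∑ _ι : Fin (2*s) → Fin r, Mstar := Finset.sum_le_sum fun ι _ => step2 ι
        _ = (Fintype.card (Fin (2*s) → Fin r) : ℝ) * Mstar := by
            rw [Finset.sum_const, Finset.card_univ, nsmul_eq_mul]
        _ = (r : ℝ) ^ (2*s) * Mstar := by
            rw [Fintype.card_fun, Fintype.card_fin, Fintype.card_fin]
            push_cast
            ring
    have hone : (1 : ℝ) ≤ ((d:ℝ) + 2) ^ (2*s) := by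
      apply one_le_pow₀
      have : (0:ℝ) ≤ (d:ℝ) := Nat.cast_nonneg d
      linarith
    calc Jw s 𝔞 φ (Finset.univ.biUnion A) ≤ (r : ℝ) ^ (2*s) * Mstar := by
          rw [hJweq]
          exact le_trans step1 step3
      _ ≤ ((d:ℝ) + 2) ^ (2*s) * ((r : ℝ) ^ (2*s) * Mstar) := by
          apply le_mul_of_one_le_left ?_ hone
          positivity
      _ = ((d:ℝ) + 2) ^ (2*s) * (r : ℝ) ^ (2*s) * Mstar := by ring
  · -- part (ii)
    intro A hA l hl1 hls
    set ψ : Polynomial ℚ := φ ⟨0, by omega⟩ with hψ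
    set v := vA (fun _ => (1:ℝ)) ψ A with hv
    have hNv : NN v := NN_vA _ (fun _ => zero_le_one) _ _
    set z := v * sg v with hz
    have hNz : NN z := hNv.mul hNv.sg
    have hJs : Jw1 s (fun _ => (1:ℝ)) ψ A = ev1 (z ^ s) :=
      Jw1_eq s (fun _ => (1:ℝ)) ψ A hA
    have hJl : Jw1 l (fun _ => (1:ℝ)) ψ A = ev1 (z ^ l) :=
      Jw1_eq l (fun _ => (1:ℝ)) ψ A hA
    have hzl : z ^ l = (v ^ l) * sg (v ^ l) := by rw [hz, mul_pow, map_pow]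
    have hpd : ∀ g : GG, (z ^ l).coeff g ≤ (z ^ l).coeff 1 := by
      rw [hzl]
      exact pd_bound (v ^ l) (hNv.pow l)
    have hsplit : z ^ s = z ^ l * z ^ (s - l) := by
      rw [← pow_add]
      congr 1
      omega
    have hle := ev1_mul_le (z ^ l) (z ^ (s - l)) (hNz.pow _) hpd ((hNz.pow l) 1)
    have haugv : aug v = (A.card : ℝ) := by
      rw [hv, vA, map_sum]
      rw [Finset.sum_congr rfl (fun a _ => aug_single _ _)]
      simp
    have haugsgv : aug (sg v) = (A.card : ℝ) := by
      have hsgv : sg v = ∑ a ∈ A, MonoidAlgebra.single (gam ψ a)⁻¹ (1:ℝ) := by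
        rw [hv, vA, map_sum]
        exact Finset.sum_congr rfl fun a _ => sg_single _ _
      rw [hsgv, map_sum]
      rw [Finset.sum_congr rfl (fun a _ => aug_single _ _)]
      simp
    have haugz : aug (z ^ (s - l)) = (A.card : ℝ) ^ (2*s - 2*l) := by
      rw [map_pow, hz, map_mul, haugv, haugsgv, ← sq, ← pow_mul]
      congr 1
      omega
    have hlnn : 0 ≤ ev1 (z ^ l) := (hNz.pow l).ev1_nonneg
    rw [hJs, hJl, hsplit, one_mul, mul_comm ((A.card : ℝ) ^ (2*s - 2*l)) (ev1 (z ^ l)),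
      ← haugz]
    exact hle
end

section
/- Let s, d₁, d₂ ∈ ℕ, let f : ℝ → ℝ^{d₁}, g : ℝ → ℝ^{d₂} and 𝔞 : ℝ → [0,∞) be functions, and let A ⊆ ℝ be a finite set. Then E_{s,𝔞}(A;g) ≤ |s·f(A) − s·f(A)|·E_{s,𝔞}(A;f,g), where s·f(A) − s·f(A) = {f(a₁)+⋯+f(a_s) − f(a_{s+1}) − ⋯ − f(a_{2s}) : a₁,…,a_{2s} ∈ A} ⊆ ℝ^{d₁}. -/
open scoped Classical

/-- The weighted energy `E_{s,𝔞}(A;g)`: the weighted count of tuples in `A^{2s}`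
satisfying `g(a₁)+⋯+g(a_s) = g(a_{s+1})+⋯+g(a_{2s})`. -/
noncomputable def Eg (s d₂ : ℕ) (𝔞 : ℝ → ℝ) (g : ℝ → (Fin d₂ → ℝ)) (A : Finset ℝ) : ℝ :=
  ∑ a ∈ Fintype.piFinset (fun _ : Fin (2*s) => A),
    if ∑ i : Fin s, g (a (lo s i)) = ∑ i : Fin s, g (a (hi s i))
    then ∏ i, 𝔞 (a i) else 0

/-- The weighted energy `E_{s,𝔞}(A;f,g)`: same as `Eg` with the additional
restriction `f(a₁)+⋯+f(a_s) = f(a_{s+1})+⋯+f(a_{2s})`. -/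
noncomputable def Efg (s d₁ d₂ : ℕ) (𝔞 : ℝ → ℝ) (f : ℝ → (Fin d₁ → ℝ))
    (g : ℝ → (Fin d₂ → ℝ)) (A : Finset ℝ) : ℝ :=
  ∑ a ∈ Fintype.piFinset (fun _ : Fin (2*s) => A),
    if (∑ i : Fin s, f (a (lo s i)) = ∑ i : Fin s, f (a (hi s i))) ∧
       (∑ i : Fin s, g (a (lo s i)) = ∑ i : Fin s, g (a (hi s i)))
    then ∏ i, 𝔞 (a i) else 0

/-- The difference set `s·f(A) − s·f(A) ⊆ ℝ^{d₁}`. -/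
noncomputable def fDiffSet (s d₁ : ℕ) (f : ℝ → (Fin d₁ → ℝ)) (A : Finset ℝ) :
    Finset (Fin d₁ → ℝ) :=
  (Fintype.piFinset (fun _ : Fin (2*s) => A)).image
    (fun a => ∑ i : Fin s, f (a (lo s i)) - ∑ i : Fin s, f (a (hi s i)))

namespace EnergyAux

def e2 (s : ℕ) : Fin s ⊕ Fin s ≃ Fin (2*s) := finSumFinEquiv.trans (finCongr (two_mul s).symm)

lemma e2_inl (s : ℕ) (i : Fin s) : e2 s (Sum.inl i) = lo s i := by
  apply Fin.ext; simp [e2, lo]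

lemma e2_inr (s : ℕ) (i : Fin s) : e2 s (Sum.inr i) = hi s i := by
  apply Fin.ext; simp [e2, hi, Nat.add_comm]

noncomputable def glue {s : ℕ} (b c : Fin s → ℝ) : Fin (2*s) → ℝ :=
  fun j => Sum.elim b c ((e2 s).symm j)

@[simp] lemma glue_lo {s : ℕ} (b c : Fin s → ℝ) (i : Fin s) : glue b c (lo s i) = b i := by
  rw [glue, ← e2_inl, Equiv.symm_apply_apply]; rfl

@[simp] lemma glue_hi {s : ℕ} (b c : Fin s → ℝ) (i : Fin s) : glue b c (hi s i) = c i := by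
  rw [glue, ← e2_inr, Equiv.symm_apply_apply]; rfl

lemma glue_mem {s : ℕ} {A : Finset ℝ} {b c : Fin s → ℝ}
    (hb : b ∈ Fintype.piFinset (fun _ : Fin s => A))
    (hc : c ∈ Fintype.piFinset (fun _ : Fin s => A)) :
    glue b c ∈ Fintype.piFinset (fun _ : Fin (2*s) => A) := by
  simp only [Fintype.mem_piFinset] at *
  intro j
  simp only [glue]
  rcases (e2 s).symm j with i | i
  · exact hb i
  · exact hc i

lemma glue_split {s : ℕ} (a : Fin (2*s) → ℝ) :
    glue (fun i => a (lo s i)) (fun i => a (hi s i)) = a := by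
  funext j
  simp only [glue]
  rcases h : (e2 s).symm j with i | i
  · simp only [Sum.elim_inl]
    congr 1
    rw [← e2_inl, ← h, Equiv.apply_symm_apply]
  · simp only [Sum.elim_inr]
    congr 1
    rw [← e2_inr, ← h, Equiv.apply_symm_apply]

lemma sum_split (s : ℕ) (A : Finset ℝ) (F : (Fin (2*s) → ℝ) → ℝ) :
    ∑ a ∈ Fintype.piFinset (fun _ : Fin (2*s) => A), F a
    = ∑ b ∈ Fintype.piFinset (fun _ : Fin s => A),
      ∑ c ∈ Fintype.piFinset (fun _ : Fin s => A), F (glue b c) := by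
  rw [← Finset.sum_product']
  refine Finset.sum_nbij' (i := fun a => (fun i => a (lo s i), fun i => a (hi s i)))
    (j := fun p => glue p.1 p.2) ?_ ?_ ?_ ?_ ?_
  · intro a ha
    simp only [Fintype.mem_piFinset, Finset.mem_product] at *
    exact ⟨fun i => ha _, fun i => ha _⟩
  · intro p hp
    simp only [Finset.mem_product] at hp
    exact glue_mem hp.1 hp.2
  · intro a _
    exact glue_split a
  · intro p _
    ext i <;> simp
  · intro a _
    rw [glue_split]

lemma prod_glue {s : ℕ} (h : ℝ → ℝ) (b c : Fin s → ℝ) :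
    ∏ j : Fin (2*s), h (glue b c j) = (∏ i, h (b i)) * (∏ i, h (c i)) := by
  rw [← Equiv.prod_comp (e2 s) (fun j => h (glue b c j)), Fintype.prod_sum_type]
  simp [e2_inl, e2_inr]

end EnergyAux

open EnergyAux in
theorem energy_auxiliary_equation_bound (s d₁ d₂ : ℕ)
    (f : ℝ → (Fin d₁ → ℝ)) (g : ℝ → (Fin d₂ → ℝ))
    (𝔞 : ℝ → ℝ) (h𝔞 : ∀ x, 0 ≤ 𝔞 x) (A : Finset ℝ) :
    Eg s d₂ 𝔞 g A ≤ ((fDiffSet s d₁ f A).card : ℝ) * Efg s d₁ d₂ 𝔞 f g A := by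
  classical
  set Q := Fintype.piFinset (fun _ : Fin s => A) with hQ
  set G : (Fin s → ℝ) → (Fin d₂ → ℝ) := fun b => ∑ i, g (b i) with hG
  set F : (Fin s → ℝ) → (Fin d₁ → ℝ) := fun b => ∑ i, f (b i) with hF
  set W : (Fin s → ℝ) → ℝ := fun b => ∏ i, 𝔞 (b i) with hW
  have hW0 : ∀ b, 0 ≤ W b := fun b => Finset.prod_nonneg (fun i _ => h𝔞 _)
  -- the fiber count
  set N : (Fin d₂ → ℝ) × (Fin d₁ → ℝ) → ℝ :=
    fun p => ∑ b ∈ Q.filter (fun b => (G b, F b) = p), W b with hN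
  have hN0 : ∀ p, 0 ≤ N p := fun p => Finset.sum_nonneg (fun b _ => hW0 b)
  set V : Finset ((Fin d₂ → ℝ) × (Fin d₁ → ℝ)) := Q.image (fun b => (G b, F b)) with hV
  have hNout : ∀ p, p ∉ V → N p = 0 := by
    intro p hp
    simp only [hN]
    have : Q.filter (fun b => (G b, F b) = p) = ∅ := by
      rw [Finset.filter_eq_empty_iff]
      intro b hb hbp
      exact hp (hbp ▸ Finset.mem_image_of_mem _ hb)
    simp [this]
  set D := fDiffSet s d₁ f A with hD
  -- the shifted energy
  set T : (Fin d₁ → ℝ) → ℝ := fun x => ∑ b ∈ Q, ∑ c ∈ Q,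
      if G b = G c ∧ F b - F c = x then W b * W c else 0 with hT
  -- T as a sum over fibers
  have hTfib : ∀ x, T x = ∑ p ∈ V, N p * N (p.1, p.2 - x) := by
    intro x
    have step1 : ∀ b, (∑ c ∈ Q, if G b = G c ∧ F b - F c = x then W b * W c else 0)
        = W b * N (G b, F b - x) := by
      intro b
      simp only [hN, Finset.sum_filter, Finset.mul_sum]
      apply Finset.sum_congr rfl
      intro c _
      have : (G b = G c ∧ F b - F c = x) ↔ ((G c, F c) = (G b, F b - x)) := by
        rw [Prod.mk.injEq]
        constructor
        · rintro ⟨h1, h2⟩; exact ⟨h1.symm, by rw [← h2]; abel⟩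
        · rintro ⟨h1, h2⟩; exact ⟨h1.symm, by rw [h2]; abel⟩
      rw [if_congr this rfl rfl]
      split <;> simp
    calc T x = ∑ b ∈ Q, W b * N (G b, F b - x) := by
          rw [hT]; exact Finset.sum_congr rfl (fun b _ => step1 b)
      _ = ∑ p ∈ V, ∑ b ∈ Q.filter (fun b => (G b, F b) = p), W b * N (G b, F b - x) := by
          rw [Finset.sum_fiberwise_of_maps_to (fun b hb => Finset.mem_image_of_mem _ hb)]
      _ = ∑ p ∈ V, N p * N (p.1, p.2 - x) := by
          apply Finset.sum_congr rfl
          intro p _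
          simp only [hN, Finset.sum_mul]
          apply Finset.sum_congr rfl
          intro b hb
          have hbp : (G b, F b) = p := (Finset.mem_filter.mp hb).2
          rw [← hbp]
      _ = _ := rfl
  -- shifted square sum is bounded by the unshifted one
  have hshift : ∀ x, ∑ p ∈ V, N (p.1, p.2 - x) ^ 2 ≤ ∑ p ∈ V, N p ^ 2 := by
    intro x
    have hinj : Set.InjOn (fun p : (Fin d₂ → ℝ) × (Fin d₁ → ℝ) => (p.1, p.2 - x)) V := by
      intro p _ q _ h
      simp only [Prod.mk.injEq] at h
      exact Prod.ext h.1 (sub_left_inj.mp h.2)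
    calc ∑ p ∈ V, N (p.1, p.2 - x) ^ 2
        = ∑ q ∈ V.image (fun p => (p.1, p.2 - x)), N q ^ 2 := by
          rw [Finset.sum_image (fun p hp q hq h => hinj hp hq h)]
      _ ≤ ∑ q ∈ V ∪ V.image (fun p => (p.1, p.2 - x)), N q ^ 2 := by
          apply Finset.sum_le_sum_of_subset_of_nonneg Finset.subset_union_right
          intro q _ _; positivity
      _ = ∑ q ∈ V, N q ^ 2 := by
          refine (Finset.sum_subset Finset.subset_union_left ?_).symm
          intro q _ hq
          rw [hNout q hq]; ring
  -- hence T x ≤ T 0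
  have hT0 : T 0 = ∑ p ∈ V, N p ^ 2 := by
    rw [hTfib 0]
    apply Finset.sum_congr rfl
    intro p _
    rw [sub_zero, sq]
  have hTle : ∀ x, T x ≤ T 0 := by
    intro x
    rw [hTfib x, hT0]
    have amgm : ∀ p ∈ V, N p * N (p.1, p.2 - x)
        ≤ (N p ^ 2 + N (p.1, p.2 - x) ^ 2) / 2 := by
      intro p _
      nlinarith [sq_nonneg (N p - N (p.1, p.2 - x))]
    calc ∑ p ∈ V, N p * N (p.1, p.2 - x)
        ≤ ∑ p ∈ V, (N p ^ 2 + N (p.1, p.2 - x) ^ 2) / 2 := Finset.sum_le_sum amgm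
      _ = ((∑ p ∈ V, N p ^ 2) + ∑ p ∈ V, N (p.1, p.2 - x) ^ 2) / 2 := by
          rw [← Finset.sum_add_distrib, ← Finset.sum_div]
      _ ≤ ((∑ p ∈ V, N p ^ 2) + ∑ p ∈ V, N p ^ 2) / 2 := by
          linarith [hshift x]
      _ = ∑ p ∈ V, N p ^ 2 := by ring
  -- rewrite Eg and Efg via glue
  have hEg : Eg s d₂ 𝔞 g A = ∑ b ∈ Q, ∑ c ∈ Q, if G b = G c then W b * W c else 0 := by
    rw [Eg, sum_split]
    apply Finset.sum_congr rfl; intro b _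
    apply Finset.sum_congr rfl; intro c _
    simp only [glue_lo, glue_hi, prod_glue]; rfl
  have hEfg : Efg s d₁ d₂ 𝔞 f g A = T 0 := by
    rw [Efg, sum_split, hT]
    apply Finset.sum_congr rfl; intro b _
    apply Finset.sum_congr rfl; intro c _
    simp only [glue_lo, glue_hi, prod_glue]
    congr 1
    simp only [eq_iff_iff, sub_eq_zero]
    tauto
  -- decompose Eg over the difference set
  have hdecomp : Eg s d₂ 𝔞 g A = ∑ x ∈ D, T x := by
    rw [hEg]
    calc ∑ b ∈ Q, ∑ c ∈ Q, (if G b = G c then W b * W c else 0)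
        = ∑ b ∈ Q, ∑ c ∈ Q, ∑ x ∈ D, (if G b = G c ∧ F b - F c = x then W b * W c else 0) := by
          apply Finset.sum_congr rfl; intro b hb
          apply Finset.sum_congr rfl; intro c hc
          have hmem : F b - F c ∈ D := by
            rw [hD, fDiffSet]
            refine Finset.mem_image.mpr ⟨glue b c, glue_mem hb hc, ?_⟩
            simp only [glue_lo, glue_hi]; rfl
          by_cases hbc : G b = G c
          · simp only [hbc, true_and, if_true]
            rw [Finset.sum_ite_eq D (F b - F c) (fun _ => W b * W c), if_pos hmem]
          · simp [hbc]
      _ = ∑ b ∈ Q, ∑ x ∈ D, ∑ c ∈ Q, (if G b = G c ∧ F b - F c = x then W b * W c else 0) :=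
          Finset.sum_congr rfl (fun b _ => Finset.sum_comm)
      _ = ∑ x ∈ D, ∑ b ∈ Q, ∑ c ∈ Q, (if G b = G c ∧ F b - F c = x then W b * W c else 0) :=
          Finset.sum_comm
      _ = ∑ x ∈ D, T x := by simp only [hT]
  rw [hdecomp, hEfg]
  calc ∑ x ∈ D, T x ≤ ∑ x ∈ D, T 0 := Finset.sum_le_sum (fun x _ => hTle x)
    _ = (D.card : ℝ) * T 0 := by rw [Finset.sum_const, nsmul_eq_mul]
end

section
/- Let 0 < c < 1 and C > 0 be real numbers, let A be a finite nonempty set, and let (A_i)_{i≥0} be a sequence of finite sets with A₀ = A such that for each i ≥ 1 one has A_i = A_{i−1} \ U_i for some set U_i ⊆ A_{i−1} with |U_i| ≥ C·|A_{i−1}|^{1−c}. Then there exists an index r ≤ 2·(log|A| + 2) + C^{−1}·|A|^{c}/(2^{c} − 1) such that |A_r| ≤ 1. -/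
/-- Key potential drop: if `1 ≤ x`, `0 ≤ d ≤ x` and `C * x ^ (1-c) ≤ d`, then
`(x - d) ^ c ≤ x ^ c - c * C`. -/
lemma pot_drop {c C x d : ℝ} (hc0 : 0 < c) (hc1 : c < 1) (hC : 0 < C)
    (hx : 1 ≤ x) (hd0 : 0 ≤ d) (hdx : d ≤ x) (hCd : C * x ^ (1 - c) ≤ d) :
    (x - d) ^ c ≤ x ^ c - c * C := by
  have hx0 : (0:ℝ) < x := lt_of_lt_of_le one_pos hx
  have h1 : x - d = x * (1 + (-(d/x))) := by field_simp; ring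
  have hs : (-1:ℝ) ≤ -(d/x) := by
    rw [neg_le_neg_iff]; exact (div_le_one hx0).2 hdx
  have hb := rpow_one_add_le_one_add_mul_self hs hc0.le hc1.le
  have hxd : (0:ℝ) ≤ 1 + -(d/x) := by
    have : d / x ≤ 1 := (div_le_one hx0).2 hdx
    linarith
  calc (x - d) ^ c = x ^ c * (1 + -(d/x)) ^ c := by
        rw [h1, Real.mul_rpow hx0.le hxd]
    _ ≤ x ^ c * (1 + c * -(d/x)) := by
        apply mul_le_mul_of_nonneg_left hb (Real.rpow_nonneg hx0.le c)
    _ = x ^ c - c * (d * x ^ (c - 1)) := by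
        rw [Real.rpow_sub hx0, Real.rpow_one]; field_simp; ring
    _ ≤ x ^ c - c * C := by
        have h2 : C = C * (x ^ (1 - c) * x ^ (c - 1)) := by
          rw [← Real.rpow_add hx0]; norm_num
        have h3 : C * x ^ (1-c) * x ^ (c-1) ≤ d * x ^ (c-1) :=
          mul_le_mul_of_nonneg_right hCd (Real.rpow_nonneg hx0.le _)
        nlinarith [Real.rpow_nonneg hx0.le (c-1)]

theorem iteration_termination {α : Type*} [DecidableEq α]
    (c C : ℝ) (hc0 : 0 < c) (hc1 : c < 1) (hC : 0 < C)
    (A : Finset α) (hA : A.Nonempty)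
    (Aseq : ℕ → Finset α) (h0 : Aseq 0 = A)
    (hstep : ∀ i : ℕ, ∃ U : Finset α, U ⊆ Aseq i ∧ Aseq (i+1) = Aseq i \ U ∧
      C * ((Aseq i).card : ℝ) ^ (1 - c) ≤ U.card) :
    ∃ r : ℕ, (r : ℝ) ≤ 2 * (Real.logb 2 A.card + 2) + C⁻¹ * (A.card : ℝ) ^ c / (2 ^ c - 1) ∧
      (Aseq r).card ≤ 1 := by
  set N : ℝ := (A.card : ℝ) with hN
  have hN1 : (1:ℝ) ≤ N := by
    rw [hN]; exact_mod_cast Finset.one_le_card.2 hA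
  set r : ℕ := ⌈N ^ c / (c * C)⌉₊ with hr
  -- Claim: some j ≤ r has card ≤ 1
  have key : ∃ j ≤ r, (Aseq j).card ≤ 1 := by
    by_contra h
    push_neg at h
    have hmain : ∀ j ≤ r, ((Aseq j).card : ℝ) ^ c ≤ N ^ c - c * C * j := by
      intro j hj
      induction j with
      | zero => simp [h0, hN]
      | succ k ih =>
        have hk : k ≤ r := Nat.le_of_succ_le hj
        have ihk := ih hk
        have hcard : 2 ≤ (Aseq k).card := h k hk
        have hx1 : (1:ℝ) ≤ ((Aseq k).card : ℝ) := by exact_mod_cast Nat.one_le_of_lt hcard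
        obtain ⟨U, hU1, hU2, hU3⟩ := hstep k
        have hcardEq : ((Aseq (k+1)).card : ℝ) = ((Aseq k).card : ℝ) - (U.card : ℝ) := by
          rw [hU2, Finset.card_sdiff_of_subset hU1]
          have := Finset.card_le_card hU1
          push_cast [Nat.cast_sub this]
          ring
        have hdx : (U.card : ℝ) ≤ ((Aseq k).card : ℝ) := by
          exact_mod_cast Finset.card_le_card hU1
        have hdrop := pot_drop hc0 hc1 hC hx1 (by positivity) hdx hU3
        rw [hcardEq]
        push_cast
        calc (((Aseq k).card : ℝ) - (U.card : ℝ)) ^ c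
            ≤ ((Aseq k).card : ℝ) ^ c - c * C := hdrop
          _ ≤ N ^ c - c * C * k - c * C := by linarith
          _ = N ^ c - c * C * (k + 1) := by ring
    have hfin := hmain r le_rfl
    have hge1 : (1:ℝ) ≤ ((Aseq r).card : ℝ) ^ c := by
      apply Real.one_le_rpow _ hc0.le
      exact_mod_cast Nat.one_le_of_lt (h r le_rfl)
    have hrge : N ^ c / (c * C) ≤ (r : ℝ) := Nat.le_ceil _
    have hcC : 0 < c * C := mul_pos hc0 hC
    have : N ^ c ≤ c * C * r := by
      rw [div_le_iff₀ hcC] at hrge; linarith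
    linarith
  obtain ⟨j, hj, hcard⟩ := key
  refine ⟨j, ?_, hcard⟩
  -- Now bound j ≤ r ≤ N^c/(cC) + 1 ≤ RHS
  have h2c : (2:ℝ) ^ c - 1 ≤ c := by
    have := rpow_one_add_le_one_add_mul_self (s := 1) (by norm_num) hc0.le hc1.le
    norm_num at this
    linarith
  have h2c0 : (0:ℝ) < (2:ℝ) ^ c - 1 := by
    have : (1:ℝ) < (2:ℝ) ^ c := Real.one_lt_rpow_iff_of_pos (by norm_num) |>.2 (Or.inl ⟨by norm_num, hc0⟩)
    linarith
  have hNc : (0:ℝ) < N ^ c := Real.rpow_pos_of_pos (by linarith) c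
  have heq : C⁻¹ * N ^ c / (2 ^ c - 1) = N ^ c / (C * (2 ^ c - 1)) := by
    field_simp
  have hstep1 : N ^ c / (c * C) ≤ C⁻¹ * N ^ c / (2 ^ c - 1) := by
    rw [heq, mul_comm c C]
    gcongr
  have hceil : (r : ℝ) < N ^ c / (c * C) + 1 := by
    exact Nat.ceil_lt_add_one (by positivity)
  have hlog : 0 ≤ Real.logb 2 N := Real.logb_nonneg (by norm_num) hN1
  have hjr : (j : ℝ) ≤ (r : ℝ) := by exact_mod_cast hj
  linarith
end
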